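/- For any partition λ, the Sprague-Grundy value of λ under RIT equals the Sprague-Grundy value of the Nim position rem(λ), i.e., G_RIT(λ) = XOR over odd indices j of (λ_j - λ_{j+1}). -/

import Mathlib

/-- The `j`-th part (0-indexed) of a partition given as a list, `0` beyond the end. -/
def part (l : List ℕ) (j : ℕ) : ℕ := l.getD j 0

/-- A partition: a nonincreasing list of positive integers. -/
def IsPartition (l : List ℕ) : Prop :=
  l.Chain' (· ≥ ·) ∧ ∀ x ∈ l, 0 < x

/-- RIT move: replace the part at (0-indexed) position `i` by a smaller value `v`,
keeping the sequence nonincreasing, then drop the (trailing) zeros. -/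
def RitMove (l l' : List ℕ) : Prop :=
  ∃ i v, i < l.length ∧ v < part l i ∧ (l.set i v).Chain' (· ≥ ·) ∧
    l' = (l.set i v).filter (fun x => x ≠ 0)

/-- RIT move on an odd-numbered row (1-indexed), i.e. an even 0-indexed position. -/
def RitMoveOdd (l l' : List ℕ) : Prop :=
  ∃ i v, i < l.length ∧ i % 2 = 0 ∧ v < part l i ∧ (l.set i v).Chain' (· ≥ ·) ∧
    l' = (l.set i v).filter (fun x => x ≠ 0)

/-- RIT move on an even-numbered row (1-indexed), i.e. an odd 0-indexed position. -/
def RitMoveEven (l l' : List ℕ) : Prop :=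
  ∃ i v, i < l.length ∧ i % 2 = 1 ∧ v < part l i ∧ (l.set i v).Chain' (· ≥ ·) ∧
    l' = (l.set i v).filter (fun x => x ≠ 0)

/-- `core λ = (λ₂, λ₂, λ₄, λ₄, …)` (1-indexed parts), as a `0`-padded sequence. -/
def core (l : List ℕ) : ℕ → ℕ := fun j => part l (2 * (j / 2) + 1)

/-- `rem λ = (λ₁ - λ₂, λ₃ - λ₄, …)` (1-indexed parts), as a `0`-padded sequence. -/
def rem (l : List ℕ) : ℕ → ℕ := fun i => part l (2 * i) - part l (2 * i + 1)

/-- A Nim move strictly decreases exactly one coordinate. -/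
def NimMove (p q : ℕ → ℕ) : Prop := ∃ i, q i < p i ∧ ∀ j, j ≠ i → q j = p j

/-- The nim-sum (bitwise XOR) of the remnant of `l`:
`(λ₁ - λ₂) ⊕ (λ₃ - λ₄) ⊕ ⋯ ⊕ (λ_{2⌈r/2⌉-1} - λ_{2⌈r/2⌉})`. -/
def nimSum (l : List ℕ) : ℕ :=
  (List.ofFn (fun i : Fin ((l.length + 1) / 2) => rem l i)).foldr (· ^^^ ·) 0

/-- The minimal excludant of a set of naturals. -/
noncomputable def mexOf (S : Set ℕ) : ℕ := sInf {n | n ∉ S}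

/-- `G` is the (normal play) Sprague-Grundy function of RIT. -/
def IsRitGrundy (G : List ℕ → ℕ) : Prop :=
  ∀ l, IsPartition l → G l = mexOf {n | ∃ l', RitMove l l' ∧ G l' = n}

/-- `G` is the misère Grundy function of RIT (value `1` at the terminal position). -/
def IsRitMisereGrundy (G : List ℕ → ℕ) : Prop :=
  G [] = 1 ∧ ∀ l, IsPartition l → l ≠ [] →
    G l = mexOf {n | ∃ l', RitMove l l' ∧ G l' = n}

/-- `G` is the misère Grundy function of Nim on `0`-padded sequences of heaps. -/
def IsNimMisereGrundy (G : (ℕ → ℕ) → ℕ) : Prop :=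
  (∀ p : ℕ → ℕ, (∀ i, p i = 0) → G p = 1) ∧
  (∀ p : ℕ → ℕ, (Function.support p).Finite → (∃ i, p i ≠ 0) →
    G p = mexOf {n | ∃ q, NimMove p q ∧ G q = n})

/-- `P` is the set of P-positions of RIT under normal play. -/
def IsRitP (P : List ℕ → Prop) : Prop :=
  ∀ l, IsPartition l → (P l ↔ ∀ l', RitMove l l' → ¬ P l')

/-! A move on row `i` of a partition changes only the `⌊i/2⌋`-th entry of `rem λ`: lowering an
odd row `λ₂ₖ₊₁` lowers `λ₂ₖ₊₁ - λ₂ₖ₊₂`, lowering an even row `λ₂ₖ₊₂` raises `λ₂ₖ₊₁ - λ₂ₖ₊₂`.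
Hence no move preserves the nim-sum of `rem λ`, while Bouton's argument shows that every smaller
nim-sum `t` is reached by lowering a single odd row `λ₂ₖ₊₁` to `λ₂ₖ₊₂ + u` for a suitable
`u < λ₂ₖ₊₁ - λ₂ₖ₊₂`, which keeps the rows nonincreasing.
By induction on `∑ λᵢ`, the Grundy value is therefore the mex of a set that contains every
value below `nimSum λ` and not `nimSum λ` itself. -/

theorem mexOf_eq {S : Set ℕ} {n : ℕ} (hn : n ∉ S) (h : ∀ m < n, m ∈ S) : mexOf S = n :=
  le_antisymm (Nat.sInf_le hn) (le_csInf ⟨n, hn⟩ fun m hm => not_lt.mp fun hlt => hm (h m hlt))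

def xorSum (f : ℕ → ℕ) : ℕ → ℕ
  | 0 => 0
  | n + 1 => xorSum f n ^^^ f n

section XorSum

variable {f g : ℕ → ℕ}

theorem xorSum_succ' (f : ℕ → ℕ) (n : ℕ) :
    xorSum f (n + 1) = f 0 ^^^ xorSum (fun i => f (i + 1)) n := by
  induction n with
  | zero => simp [xorSum]
  | succ n ih => rw [xorSum, ih, xorSum, Nat.xor_assoc]

theorem foldr_xor_ofFn (f : ℕ → ℕ) (n : ℕ) :
    (List.ofFn fun i : Fin n => f i).foldr (· ^^^ ·) 0 = xorSum f n := by
  induction n generalizing f with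
  | zero => rfl
  | succ n ih => simp [List.ofFn_succ, ih (fun i => f (i + 1)), xorSum_succ']

theorem xorSum_congr {n : ℕ} (h : ∀ i < n, f i = g i) : xorSum f n = xorSum g n := by
  induction n with
  | zero => rfl
  | succ n ih => rw [xorSum, xorSum, ih fun i hi => h i (by omega), h n (by omega)]

theorem xorSum_eq_of_forall_ge {n m : ℕ} (hnm : n ≤ m) (h : ∀ i, n ≤ i → f i = 0) :
    xorSum f m = xorSum f n := by
  induction m, hnm using Nat.le_induction with
  | base => rfl
  | succ m hnm ih => rw [xorSum, ih, h m hnm, Nat.xor_zero]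

theorem xorSum_update {k n : ℕ} (hk : k < n) (u : ℕ) :
    xorSum (Function.update f k u) n = xorSum f n ^^^ f k ^^^ u := by
  induction n with
  | zero => omega
  | succ n ih =>
    obtain hk | rfl := Nat.lt_succ_iff_lt_or_eq.mp hk
    · rw [xorSum, xorSum, ih hk, Function.update_of_ne (by omega)]
      ac_rfl
    · rw [xorSum, xorSum, Function.update_self,
        xorSum_congr fun i hi => Function.update_of_ne (by omega) u f,
        Nat.xor_xor_cancel_right]

theorem xorSum_update_ne {k n u : ℕ} (hk : k < n) (hu : u ≠ f k) :
    xorSum (Function.update f k u) n ≠ xorSum f n := by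
  rw [xorSum_update hk, Nat.xor_assoc]
  intro h
  exact hu (Nat.xor_eq_zero_iff.mp (Nat.xor_right_inj.mp (h.trans (Nat.xor_zero _).symm))).symm

theorem exists_lt_xorSum_update_eq {n t : ℕ} (ht : t < xorSum f n) :
    ∃ k < n, ∃ u < f k, xorSum (Function.update f k u) n = t := by
  induction n generalizing t with
  | zero => exact absurd ht (Nat.not_lt_zero t)
  | succ n ih =>
    rcases Nat.lt_xor_cases ht with ht' | ht'
    · obtain ⟨k, hk, u, hu, hsum⟩ := ih ht'
      refine ⟨k, by omega, u, hu, ?_⟩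
      rw [xorSum, hsum, Function.update_of_ne (by omega), Nat.xor_xor_cancel_right]
    · refine ⟨n, by omega, _, ht', ?_⟩
      rw [xorSum_update (by omega), xorSum, Nat.xor_xor_cancel_right, Nat.xor_comm t,
        Nat.xor_xor_cancel_left]

end XorSum

section Parts

variable {l : List ℕ}

theorem part_eq_zero {j : ℕ} (h : l.length ≤ j) : part l j = 0 :=
  List.getD_eq_default l 0 h

theorem part_eq_getElem {j : ℕ} (h : j < l.length) : part l j = l[j] :=
  List.getD_eq_getElem l 0 h

theorem part_set {i : ℕ} (hi : i < l.length) (v : ℕ) :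
    part (l.set i v) = Function.update (part l) i v := by
  funext j
  simp only [part, List.getD_eq_getElem?_getD, List.getElem?_set, Function.update_apply]
  by_cases h : j = i
  · simp [h, hi]
  · simp [h, Ne.symm h]

theorem isChain_ge_iff_antitone_part : l.IsChain (· ≥ ·) ↔ Antitone (part l) := by
  rw [List.isChain_iff_getElem]
  constructor
  · refine fun h => antitone_nat_of_succ_le fun j => ?_
    by_cases hj : j + 1 < l.length
    · rw [part_eq_getElem hj, part_eq_getElem (by omega)]
      exact h j hj
    · rw [part_eq_zero (by omega)]
      exact Nat.zero_le _
  · intro h j hj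
    have := h (Nat.le_succ j)
    rwa [part_eq_getElem hj, part_eq_getElem (by omega)] at this

/-- The zeros of a nonincreasing list of naturals form a suffix. -/
theorem part_filter_ne_zero (hl : l.IsChain (· ≥ ·)) : part (l.filter (· ≠ 0)) = part l := by
  rw [List.isChain_iff_pairwise] at hl
  induction l with
  | nil => rfl
  | cons a t ih =>
    rw [List.pairwise_cons] at hl
    by_cases ha : a = 0
    · subst ha
      have ht : ∀ x ∈ t, x = 0 := fun x hx => Nat.le_zero.mp (hl.1 x hx)
      rw [List.filter_cons_of_neg (by simp), List.filter_eq_nil_iff.mpr (by simpa using ht)]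
      funext j
      rcases j with _ | j
      · rfl
      · by_cases hj : j < t.length
        · exact (ht _ (List.getElem_mem hj)).symm.trans (List.getD_eq_getElem t 0 hj).symm
        · exact (List.getD_eq_default t 0 (by omega)).symm
    · rw [List.filter_cons_of_pos (by simpa using ha)]
      funext j
      rcases j with _ | j
      · rfl
      · exact congrFun (ih hl.2) j

theorem isPartition_filter_ne_zero (hl : l.IsChain (· ≥ ·)) : IsPartition (l.filter (· ≠ 0)) := by
  refine ⟨?_, fun x hx => Nat.pos_of_ne_zero (by simpa using (List.mem_filter.mp hx).2)⟩
  rw [List.isChain_iff_pairwise] at hl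
  exact List.isChain_iff_pairwise.mpr (hl.sublist List.filter_sublist)

theorem sum_filter_set_lt {i v : ℕ} (hi : i < l.length) (hv : v < part l i) :
    ((l.set i v).filter (· ≠ 0)).sum < l.sum := by
  have hset : (l.set i v).sum < l.sum := by
    conv_rhs => rw [← List.set_getElem_self hi]
    rw [List.sum_set, List.sum_set, if_pos (by simpa), if_pos (by simpa)]
    rw [part_eq_getElem hi] at hv
    omega
  exact lt_of_le_of_lt (List.filter_sublist.sum_le_sum fun a _ => Nat.zero_le a) hset

end Parts

theorem Antitone.update_nat {α : Type*} [Preorder α] {f : ℕ → α} (hf : Antitone f) {i : ℕ}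
    {a : α} (h₁ : f (i + 1) ≤ a) (h₂ : a ≤ f i) : Antitone (Function.update f i a) := by
  refine antitone_nat_of_succ_le fun n => ?_
  simp only [Function.update_apply]
  split_ifs with hn₁ hn₂ hn₂
  · omega
  · subst hn₁; exact h₂.trans (hf (Nat.le_succ n))
  · subst hn₂; exact h₁
  · exact hf (Nat.le_succ n)

section Move

variable {l l' : List ℕ} {i v : ℕ}

theorem part_filter_set (hi : i < l.length) (hc : (l.set i v).IsChain (· ≥ ·)) :
    part ((l.set i v).filter (· ≠ 0)) = Function.update (part l) i v :=
  (part_filter_ne_zero hc).trans (part_set hi v)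

theorem length_filter_set_le : ((l.set i v).filter (· ≠ 0)).length ≤ l.length :=
  List.filter_sublist.length_le.trans (List.length_set ..).le

theorem rem_eq_of_part_eq_update (h : part l' = Function.update (part l) i v) {j : ℕ}
    (hj : j ≠ i / 2) : rem l' j = rem l j := by
  simp only [rem, h, Function.update_of_ne (show 2 * j ≠ i by omega),
    Function.update_of_ne (show 2 * j + 1 ≠ i by omega)]

theorem rem_div_two_ne (hl : Antitone (part l)) (hl' : Antitone (part l'))
    (h : part l' = Function.update (part l) i v) (hv : v < part l i) :
    rem l' (i / 2) ≠ rem l (i / 2) := by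
  obtain ⟨k, rfl | rfl⟩ := Nat.even_or_odd' i
  · have hle := hl' (show 2 * k ≤ 2 * k + 1 by omega)
    simp only [rem, h, Function.update_self,
      Function.update_of_ne (show 2 * k + 1 ≠ 2 * k by omega),
      show 2 * k / 2 = k by omega] at hle ⊢
    omega
  · have hle := hl (show 2 * k ≤ 2 * k + 1 by omega)
    simp only [rem, h, Function.update_self,
      Function.update_of_ne (show 2 * k ≠ 2 * k + 1 by omega),
      show (2 * k + 1) / 2 = k by omega] at hle hv ⊢
    omega

theorem nimSum_eq_xorSum {N : ℕ} (h : l.length ≤ 2 * N) : nimSum l = xorSum (rem l) N := by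
  rw [nimSum, foldr_xor_ofFn]
  refine (xorSum_eq_of_forall_ge (by omega) fun j hj => ?_).symm
  simp only [rem, part_eq_zero (show l.length ≤ 2 * j by omega),
    part_eq_zero (show l.length ≤ 2 * j + 1 by omega)]

theorem RitMove.isPartition (h : RitMove l l') : IsPartition l' := by
  obtain ⟨i, v, -, -, hc, rfl⟩ := h
  exact isPartition_filter_ne_zero hc

theorem RitMove.sum_lt (h : RitMove l l') : l'.sum < l.sum := by
  obtain ⟨i, v, hi, hv, -, rfl⟩ := h
  exact sum_filter_set_lt hi hv

theorem RitMove.nimSum_ne (hl : l.IsChain (· ≥ ·)) (h : RitMove l l') : nimSum l' ≠ nimSum l := by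
  obtain ⟨i, v, hi, hv, hc, rfl⟩ := h
  have hpart := part_filter_set hi hc
  have hanti : Antitone (part ((l.set i v).filter (· ≠ 0))) :=
    (part_filter_ne_zero hc).symm ▸ isChain_ge_iff_antitone_part.mp hc
  have hrem : rem ((l.set i v).filter (· ≠ 0)) = Function.update (rem l) (i / 2) _ :=
    Function.eq_update_iff.mpr ⟨rfl, fun j hj => rem_eq_of_part_eq_update hpart hj⟩
  rw [nimSum_eq_xorSum (N := l.length) (length_filter_set_le.trans (by omega)),
    nimSum_eq_xorSum (N := l.length) (by omega), hrem]
  exact xorSum_update_ne (by omega)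
    (rem_div_two_ne (isChain_ge_iff_antitone_part.mp hl) hanti hpart hv)

theorem exists_ritMove_nimSum_eq (hl : l.IsChain (· ≥ ·)) {t : ℕ} (ht : t < nimSum l) :
    ∃ l', RitMove l l' ∧ nimSum l' = t := by
  rw [nimSum_eq_xorSum (N := l.length) (by omega)] at ht
  obtain ⟨k, -, u, hu, hsum⟩ := exists_lt_xorSum_update_eq ht
  have hp := isChain_ge_iff_antitone_part.mp hl
  have hle := hp (show 2 * k ≤ 2 * k + 1 by omega)
  have hv : part l (2 * k + 1) + u < part l (2 * k) := by simp only [rem] at hu; omega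
  have hi : 2 * k < l.length := by
    by_contra hk
    rw [part_eq_zero (show l.length ≤ 2 * k by omega)] at hv
    omega
  have hc : (l.set (2 * k) (part l (2 * k + 1) + u)).IsChain (· ≥ ·) := by
    rw [isChain_ge_iff_antitone_part, part_set hi]
    exact hp.update_nat (by omega) hv.le
  refine ⟨_, ⟨2 * k, _, hi, hv, hc, rfl⟩, ?_⟩
  have hpart := part_filter_set hi hc
  have hrem : rem ((l.set (2 * k) (part l (2 * k + 1) + u)).filter (· ≠ 0)) =
      Function.update (rem l) k u := by
    refine Function.eq_update_iff.mpr ⟨?_, fun j hj => rem_eq_of_part_eq_update hpart (by omega)⟩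
    simp only [rem, hpart, Function.update_self,
      Function.update_of_ne (show 2 * k + 1 ≠ 2 * k by omega)]
    omega
  rw [nimSum_eq_xorSum (N := l.length) (length_filter_set_le.trans (by omega)), hrem, hsum]

end Move

/-- the Sprague-Grundy value of `λ` under RIT equals the nim-sum of
its remnant. -/
theorem stmt_6 (G : List ℕ → ℕ) (hG : IsRitGrundy G) (l : List ℕ)
    (hl : IsPartition l) : G l = nimSum l := by
  induction l using (measure List.sum).wf.induction with
  | _ l ih =>
  have hmove : ∀ l', RitMove l l' → G l' = nimSum l' :=
    fun l' h => ih l' h.sum_lt h.isPartition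
  rw [hG l hl]
  refine mexOf_eq ?_ fun t ht => ?_
  · rintro ⟨l', h, hG'⟩
    exact h.nimSum_ne hl.1 ((hmove l' h).symm.trans hG')
  · obtain ⟨l', h, rfl⟩ := exists_ritMove_nimSum_eq hl.1 ht
    exact ⟨l', h, hmove l' h⟩
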